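/- Let ξ = ( !![1,0; 1,1], !![−1,0; 0,1] ) ∈ M₂(ℂ) × M₂(ℂ). Under the dual action of H = SL₂(ℂ) × GL₂(ℂ) × ℂˣ, the stabilizer of ξ is exactly the one-dimensional family { ( s·!![1,β; 0,1], s·!![1,−β; 0,1], 1 ) : β ∈ ℂ, s ∈ {1,−1} }; that is, for (h₁,h₂,z) ∈ H one has ( z·((h₂*)⁻¹)ᵀ·ξ₁·h₁ᵀ , (h₂⁻¹)ᵀ·ξ₂·h₁ᵀ ) = (ξ₁,ξ₂) if and only if there exist β ∈ ℂ and s ∈ {1,−1} with h₁ = s·!![1,β; 0,1], h₂ = s·!![1,−β; 0,1] and z = 1. -/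

import Mathlib

open Matrix

/-- For `g = !![a,b; c,d]` with determinant `Δ`, `g* = Δ⁻¹ • !![a,-b; -c,d]`. -/
noncomputable def gstar (g : Matrix (Fin 2) (Fin 2) ℂ) : Matrix (Fin 2) (Fin 2) ℂ :=
  (g.det)⁻¹ • !![g 0 0, -(g 0 1); -(g 1 0), g 1 1]

/-- The group `H = SL₂(ℂ) × GL₂(ℂ) × ℂˣ`. -/
abbrev H := Matrix.SpecialLinearGroup (Fin 2) ℂ × GL (Fin 2) ℂ × ℂˣ

/-- The dual action `(h₁,h₂,z)·(ξ₁,ξ₂) = ( z·((h₂*)⁻¹)ᵀ·ξ₁·h₁ᵀ , (h₂⁻¹)ᵀ·ξ₂·h₁ᵀ )`. -/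
noncomputable def dact (h : H) (ξ : Matrix (Fin 2) (Fin 2) ℂ × Matrix (Fin 2) (Fin 2) ℂ) :
    Matrix (Fin 2) (Fin 2) ℂ × Matrix (Fin 2) (Fin 2) ℂ :=
  ((h.2.2 : ℂ) • (((gstar (h.2.1 : Matrix (Fin 2) (Fin 2) ℂ))⁻¹)ᵀ * ξ.1 *
      ((h.1 : Matrix.SpecialLinearGroup (Fin 2) ℂ) : Matrix (Fin 2) (Fin 2) ℂ)ᵀ),
    (((h.2.1⁻¹ : GL (Fin 2) ℂ) : Matrix (Fin 2) (Fin 2) ℂ))ᵀ * ξ.2 *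
      ((h.1 : Matrix.SpecialLinearGroup (Fin 2) ℂ) : Matrix (Fin 2) (Fin 2) ℂ)ᵀ)

/-- The covector `ξ = ( !![1,0; 1,1], !![-1,0; 0,1] )`. -/
def xi : Matrix (Fin 2) (Fin 2) ℂ × Matrix (Fin 2) (Fin 2) ℂ :=
  (!![1, 0; 1, 1], !![-1, 0; 0, 1])


/-! Write σ = diag(-1, 1) = ξ₂. The second component of the stabilizer equation says exactly
h₂ = σ h₁ σ, and g* = (det g)⁻¹ σ g σ, so then h₂* = h₁. The first component becomes
z ξ₁ h₁ᵀ = h₁ᵀ ξ₁; comparing entries, z ≠ 1 would kill the first column of h₁, so z = 1 and h₁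
is upper triangular with equal diagonal entries, which are ±1 since det h₁ = 1. -/

lemma neg_one_one_mul_mul_neg_one_one {R : Type*} [CommRing R] (M : Matrix (Fin 2) (Fin 2) R) :
    !![-1, 0; 0, 1] * M * !![-1, 0; 0, 1] = !![M 0 0, -M 0 1; -M 1 0, M 1 1] := by
  rw [eta_fin_two M]
  simp

lemma gstar_neg_one_one_mul_mul_neg_one_one (A : Matrix (Fin 2) (Fin 2) ℂ) :
    gstar (!![-1, 0; 0, 1] * A * !![-1, 0; 0, 1]) = A.det⁻¹ • A := by
  rw [gstar, neg_one_one_mul_mul_neg_one_one, det_fin_two, det_fin_two, eta_fin_two A]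
  simp

lemma transpose_inv_mul_mul_transpose_eq_self_iff {n R : Type*} [Fintype n] [DecidableEq n]
    [CommRing R] (U : GL n R) (A X : Matrix n n R) (hXX : X * X = 1) (hXt : Xᵀ = X) :
    (↑U⁻¹ : Matrix n n R)ᵀ * X * Aᵀ = X ↔ (U : Matrix n n R) = X * A * X := by
  rw [← transpose_inj, transpose_mul, transpose_mul, transpose_transpose, transpose_transpose, hXt,
    ← mul_assoc, Units.mul_inv_eq_iff_eq_mul]
  constructor
  · intro h
    rw [mul_assoc, h, ← mul_assoc, hXX, one_mul]
  · intro h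
    rw [h, ← mul_assoc, ← mul_assoc, hXX, one_mul]

lemma smul_transpose_inv_mul_mul_transpose_eq_self_iff {n R : Type*} [Fintype n] [DecidableEq n]
    [CommRing R] (A X : Matrix n n R) (hA : IsUnit A.det) (z : R) :
    z • ((A⁻¹)ᵀ * X * Aᵀ) = X ↔ z • (X * Aᵀ) = Aᵀ * X := by
  have := Aᵀ.invertibleOfIsUnitDet (by rwa [det_transpose])
  rw [transpose_nonsing_inv, mul_assoc, ← mul_smul_comm, inv_mul_eq_iff_eq_mul_of_invertible,
    eq_comm]

lemma smul_mul_transpose_eq_transpose_mul_iff_of_det_eq_one {K : Type*} [Field K] {a b c d : K}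
    (hdet : a * d - b * c = 1) (z : K) :
    z • (!![1, 0; 1, 1] * !![a, b; c, d]ᵀ) = !![a, b; c, d]ᵀ * !![1, 0; 1, 1] ↔
      z = 1 ∧ c = 0 ∧ d = a := by
  have entries : z • (!![1, 0; 1, 1] * !![a, b; c, d]ᵀ) = !![a, b; c, d]ᵀ * !![1, 0; 1, 1] ↔
      (z * a = a + c ∧ z * c = c) ∧ z * (a + b) = b + d ∧ z * (c + d) = d := by
    simp [← Matrix.ext_iff, Fin.forall_fin_two, mul_apply, vecMul, dotProduct, Fin.sum_univ_two]
  rw [entries]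
  constructor
  · rintro ⟨⟨h00, h01⟩, h10, h11⟩
    have hz : z = 1 := by
      by_contra hz
      have hc : c = 0 := by
        simpa [sub_ne_zero.mpr hz] using (by linear_combination h01 : (z - 1) * c = 0)
      have ha : a = 0 := by
        simpa [sub_ne_zero.mpr hz] using (by linear_combination h00 + hc : (z - 1) * a = 0)
      simp [ha, hc] at hdet
    subst hz
    exact ⟨rfl, by linear_combination -h00, by linear_combination -h10⟩
  · rintro ⟨rfl, rfl, rfl⟩
    simp [add_comm]

lemma smul_mul_transpose_eq_transpose_mul_iff {K : Type*} [Field K]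
    (A : Matrix (Fin 2) (Fin 2) K) (hA : A.det = 1) (z : K) :
    z • (!![1, 0; 1, 1] * Aᵀ) = Aᵀ * !![1, 0; 1, 1] ↔
      z = 1 ∧ ∃ β s : K, (s = 1 ∨ s = -1) ∧ A = s • !![1, β; 0, 1] := by
  obtain ⟨a, b, c, d, rfl⟩ : ∃ a b c d : K, A = !![a, b; c, d] := ⟨_, _, _, _, eta_fin_two A⟩
  rw [det_fin_two_of] at hA
  rw [smul_mul_transpose_eq_transpose_mul_iff_of_det_eq_one hA, and_congr_right_iff]
  intro _
  simp only [smul_of, smul_cons, smul_eq_mul, mul_one, smul_empty, mul_zero,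
    EmbeddingLike.apply_eq_iff_eq, vecCons_inj, and_true, exists_eq_or_imp, one_mul, ↓existsAndEq,
    neg_mul, true_and]
  constructor
  · rintro ⟨rfl, rfl⟩
    rcases mul_self_eq_one_iff.mp (by linear_combination hA : d * d = 1) with rfl | rfl
    · exact ⟨b, Or.inl ⟨⟨rfl, rfl⟩, rfl, rfl⟩⟩
    · exact ⟨-b, Or.inr ⟨⟨rfl, by ring⟩, rfl, rfl⟩⟩
  · rintro ⟨β, ⟨⟨rfl, rfl⟩, rfl, rfl⟩ | ⟨⟨rfl, rfl⟩, rfl, rfl⟩⟩ <;> norm_num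

lemma snd_dact_xi_eq_iff (h : H) :
    (dact h xi).2 = xi.2 ↔
      (h.2.1 : Matrix (Fin 2) (Fin 2) ℂ) = xi.2 * (h.1 : Matrix (Fin 2) (Fin 2) ℂ) * xi.2 := by
  refine transpose_inv_mul_mul_transpose_eq_self_iff _ _ _ ?_ ?_ <;>
    simp [xi, ← Matrix.ext_iff, Fin.forall_fin_two]

lemma fst_dact_xi_eq_iff (h : H)
    (h2 : (h.2.1 : Matrix (Fin 2) (Fin 2) ℂ) = xi.2 * (h.1 : Matrix (Fin 2) (Fin 2) ℂ) * xi.2) :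
    (dact h xi).1 = xi.1 ↔ (h.2.2 : ℂ) = 1 ∧
      ∃ β s : ℂ, (s = 1 ∨ s = -1) ∧ (h.1 : Matrix (Fin 2) (Fin 2) ℂ) = s • !![1, β; 0, 1] := by
  have hdet : (h.1 : Matrix (Fin 2) (Fin 2) ℂ).det = 1 := h.1.prop
  rw [dact, h2, xi, gstar_neg_one_one_mul_mul_neg_one_one, hdet, inv_one, one_smul,
    smul_transpose_inv_mul_mul_transpose_eq_self_iff _ _ (by simp [hdet]),
    smul_mul_transpose_eq_transpose_mul_iff _ hdet]

theorem stmt7 (h₁ : Matrix.SpecialLinearGroup (Fin 2) ℂ) (h₂ : GL (Fin 2) ℂ) (z : ℂˣ) :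
    dact (h₁, h₂, z) xi = xi ↔
      ∃ (β s : ℂ), (s = 1 ∨ s = -1) ∧
        (h₁ : Matrix (Fin 2) (Fin 2) ℂ) = s • !![1, β; 0, 1] ∧
        (h₂ : Matrix (Fin 2) (Fin 2) ℂ) = s • !![1, -β; 0, 1] ∧
        z = 1 := by
  have conj_eq {β s : ℂ} : xi.2 * s • !![1, β; 0, 1] * xi.2 = s • !![1, -β; 0, 1] := by
    rw [xi, neg_one_one_mul_mul_neg_one_one]
    simp
  rw [Prod.ext_iff, snd_dact_xi_eq_iff]
  constructor
  · rintro ⟨h1, h2⟩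
    obtain ⟨hz, β, s, hs, hA⟩ := (fst_dact_xi_eq_iff _ h2).1 h1
    dsimp only at h2 hz hA
    exact ⟨β, s, hs, hA, by rw [h2, hA, conj_eq], Units.val_eq_one.1 hz⟩
  · rintro ⟨β, s, hs, hA, hB, rfl⟩
    have h2 : (h₂ : Matrix (Fin 2) (Fin 2) ℂ) = xi.2 * h₁ * xi.2 := by rw [hB, hA, conj_eq]
    exact ⟨(fst_dact_xi_eq_iff (h₁, h₂, 1) h2).2 ⟨rfl, β, s, hs, hA⟩, h2⟩
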